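/- In ℚ[ℚ/ℤ], the maps ρ_n defined by ρ_n(e(r)) = (1/n)·Σ_{nr'=r} e(r') satisfy σ_n(ρ_n(x)) = x and ρ_n(σ_n(x)) = π_n·x for all x ∈ ℚ[ℚ/ℤ], where π_n = (1/n)·Σ_{ns=0} e(s). -/

import Mathlib

noncomputable section

/-- The group ℚ/ℤ. -/
abbrev QZ : Type := AddCircle (1 : ℚ)

/-- The rational group algebra ℚ[ℚ/ℤ]. -/
abbrev GA : Type := AddMonoidAlgebra ℚ QZ

/-- The standard basis element e(r) of ℚ[ℚ/ℤ]. -/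
def eQZ (r : QZ) : GA := AddMonoidAlgebra.single r 1

/-- The idempotent π_n = (1/n)·Σ_{ns=0} e(s), summing over the n-torsion subgroup of ℚ/ℤ,
whose elements are the classes of k/n for k = 0, …, n-1. -/
def piQ (n : ℕ) : GA :=
  ((n : ℚ)⁻¹) • ∑ k ∈ Finset.range n, eQZ (((k : ℚ) / (n : ℚ) : ℚ) : QZ)

/-- σ_n : ℚ[ℚ/ℤ] → ℚ[ℚ/ℤ], the linear extension of e(r) ↦ e(n • r). -/
def sigmaQ (n : ℕ) : GA → GA := AddMonoidAlgebra.mapDomain (fun r : QZ => n • r)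

/-- A chosen solution of n • r' = r in ℚ/ℤ. -/
def rdiv (n : ℕ) (r : QZ) : QZ := ((Quotient.out r / (n : ℚ) : ℚ) : QZ)

/-- ρ_n : ℚ[ℚ/ℤ] → ℚ[ℚ/ℤ], the linear map with ρ_n(e(r)) = (1/n)·Σ_{nr'=r} e(r'),
the solutions r' of n • r' = r being rdiv n r + k/n for k = 0, …, n-1. -/
def rhoQ (n : ℕ) : GA →ₗ[ℚ] GA :=
  Finsupp.lift GA ℚ QZ
    (fun r => ((n : ℚ)⁻¹) •
      ∑ k ∈ Finset.range n, eQZ (rdiv n r + (((k : ℚ) / (n : ℚ) : ℚ) : QZ)))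
    ∘ₗ (AddMonoidAlgebra.coeffLinearEquiv ℚ).toLinearMap

/- ---------- auxiliary lemmas ---------- -/

lemma coe_eq_of_int (x y : ℚ) (m : ℤ) (h : x - y = m) : (x : QZ) = (y : QZ) := by
  have : ((x - y : ℚ) : QZ) = 0 := by
    rw [AddCircle.coe_eq_zero_iff]; exact ⟨m, by simp [h]⟩
  rw [AddCircle.coe_sub, sub_eq_zero] at this; exact this

lemma nsmul_coe (x : ℚ) (n : ℕ) : n • ((x : QZ)) = ((n * x : ℚ) : QZ) := by
  rw [← AddCircle.coe_nsmul]; norm_num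

lemma sum_shift {M : Type*} [AddCommGroup M] (n : ℕ) (g : ℤ → M)
    (hg : ∀ j, g (j + n) = g j) (m : ℤ) :
    ∑ k ∈ Finset.range n, g (m + k) = ∑ k ∈ Finset.range n, g k := by
  have step : ∀ m : ℤ, ∑ k ∈ Finset.range n, g (m + 1 + k) = ∑ k ∈ Finset.range n, g (m + k) := by
    intro m
    have h1 := Finset.sum_range_succ (fun k : ℕ => g (m + k)) n
    have h2 := Finset.sum_range_succ' (fun k : ℕ => g (m + k)) n
    have e1 : ∀ k : ℕ, g (m + ((k : ℕ) + 1 : ℕ)) = g (m + 1 + k) := by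
      intro k; congr 1; push_cast; ring
    simp only [e1, Nat.cast_zero, add_zero] at h2
    have h4 : g (m + (n : ℤ)) = g m := hg m
    rw [h4] at h1
    have h3 : ∑ k ∈ Finset.range n, g (m + 1 + k) + g m =
        ∑ k ∈ Finset.range n, g (m + k) + g m := by rw [← h2, h1]
    exact add_right_cancel h3
  induction m using Int.induction_on with
  | zero => simp
  | succ i ih => rw [step i]; exact ih
  | pred i ih =>
      have h := step (-(i+1) : ℤ)
      have e2 : (-(i+1) : ℤ) + 1 = -i := by ring
      rw [e2] at h
      rw [h] at ih
      have e3 : (-(i:ℤ) - 1) = -((i:ℤ)+1) := by ring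
      simp only [e3]; exact ih

lemma nsmul_rdiv (n : ℕ) (hn : 0 < n) (r : QZ) : n • rdiv n r = r := by
  rw [rdiv, nsmul_coe]
  rw [mul_div_cancel₀ _ (by exact_mod_cast hn.ne' : (n:ℚ) ≠ 0)]
  exact Quotient.out_eq r

lemma nsmul_kdiv (n : ℕ) (hn : 0 < n) (k : ℕ) :
    n • ((((k:ℚ) / (n:ℚ)) : ℚ) : QZ) = 0 := by
  rw [nsmul_coe, mul_div_cancel₀ _ (by exact_mod_cast hn.ne' : (n:ℚ) ≠ 0)]
  have : ((k : ℚ) : QZ) = ((0 : ℚ) : QZ) := coe_eq_of_int _ _ k (by push_cast; ring)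
  simpa using this

lemma rho_single (n : ℕ) (r : QZ) (c : ℚ) :
    rhoQ n (AddMonoidAlgebra.single r c) =
      c • (((n : ℚ)⁻¹) •
        ∑ k ∈ Finset.range n, eQZ (rdiv n r + (((k : ℚ) / (n : ℚ) : ℚ) : QZ))) := by
  show Finsupp.lift GA ℚ QZ _ (Finsupp.single r c) = _
  erw [Finsupp.lift_apply]
  rw [Finsupp.sum_single_index (by rw [zero_smul])]

def sigL (n : ℕ) : GA →ₗ[ℚ] GA :=
  (AddMonoidAlgebra.coeffLinearEquiv ℚ).symm.toLinearMap ∘ₗ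
    Finsupp.lmapDomain ℚ ℚ (fun r : QZ => n • r) ∘ₗ
      (AddMonoidAlgebra.coeffLinearEquiv ℚ).toLinearMap

lemma sigma_linear (n : ℕ) :
    sigmaQ n = ⇑(sigL n) := rfl

/-- σ_n(ρ_n(x)) = x and ρ_n(σ_n(x)) = π_n·x for all x ∈ ℚ[ℚ/ℤ]. -/
theorem sigma_rho_piQ (n : ℕ) (hn : 0 < n) :
    ∀ x : GA, sigmaQ n (rhoQ n x) = x ∧ rhoQ n (sigmaQ n x) = piQ n * x := by
  have hn' : (n : ℚ) ≠ 0 := by exact_mod_cast hn.ne'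
  intro x
  constructor
  · -- σ ∘ ρ = id
    induction x using AddMonoidAlgebra.induction_linear with
    | zero => simp [sigmaQ]
    | add f g hf hg => rw [map_add, sigma_linear, map_add, ← sigma_linear, hf, hg]
    | single r c =>
        rw [rho_single, sigma_linear, map_smul, map_smul, map_sum]
        have e1 : ∀ k ∈ Finset.range n,
            (sigL n)
              (eQZ (rdiv n r + (((k : ℚ) / (n : ℚ) : ℚ) : QZ))) = eQZ r := by
          intro k _
          rw [← sigma_linear, sigmaQ, eQZ, AddMonoidAlgebra.mapDomain_single]
          congr 1
          rw [smul_add, nsmul_rdiv n hn, nsmul_kdiv n hn, add_zero]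
        rw [Finset.sum_congr rfl e1, Finset.sum_const, Finset.card_range, eQZ,
          ← Nat.cast_smul_eq_nsmul ℚ n, smul_smul, smul_smul,
          show c * (↑n)⁻¹ * (↑n : ℚ) = c from by field_simp,
          AddMonoidAlgebra.smul_single, smul_eq_mul, mul_one]
  · -- ρ ∘ σ = π_n · ·
    induction x using AddMonoidAlgebra.induction_linear with
    | zero => simp [sigmaQ]
    | add f g hf hg =>
        rw [sigma_linear, map_add, ← sigma_linear, map_add, hf, hg, mul_add]
    | single r c =>
        rw [sigmaQ, AddMonoidAlgebra.mapDomain_single, rho_single]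
        -- the coset sum identity
        obtain ⟨m, hm⟩ : ∃ m : ℤ, (Quotient.out (n • r) : ℚ) - n * Quotient.out r = m := by
          have o1 : ((Quotient.out (n • r) : ℚ) : QZ) = n • r := Quotient.out_eq _
          have o2 : ((Quotient.out r : ℚ) : QZ) = r := Quotient.out_eq _
          have h1 : ((Quotient.out (n • r) : ℚ) : QZ) = ((n * Quotient.out r : ℚ) : QZ) := by
            rw [← nsmul_coe, o1, o2]
          have h2 : (((Quotient.out (n • r) : ℚ) - n * Quotient.out r : ℚ) : QZ) = 0 := by
            rw [AddCircle.coe_sub, h1, sub_self]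
          obtain ⟨m, hm⟩ := (AddCircle.coe_eq_zero_iff (1 : ℚ)).mp h2
          exact ⟨m, by simpa using hm.symm⟩
        set g : ℤ → GA := fun j => eQZ (r + (((j : ℚ) / (n : ℚ) : ℚ) : QZ)) with hg
        have hper : ∀ j : ℤ, g (j + n) = g j := by
          intro j
          simp only [hg]
          congr 2
          exact coe_eq_of_int _ _ 1 (by push_cast; field_simp; ring)
        have key : ∑ k ∈ Finset.range n,
            eQZ (rdiv n (n • r) + (((k : ℚ) / (n : ℚ) : ℚ) : QZ)) =
            ∑ k ∈ Finset.range n, g k := by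
          have e2 : ∀ k ∈ Finset.range n,
              eQZ (rdiv n (n • r) + (((k : ℚ) / (n : ℚ) : ℚ) : QZ)) = g (m + k) := by
            intro k _
            simp only [hg]
            congr 1
            rw [rdiv, ← AddCircle.coe_add]
            have hout : (Quotient.out (n • r) : ℚ) = n * Quotient.out r + m := by
              linarith [hm]
            have : (Quotient.out (n • r) : ℚ) / n + (k : ℚ) / n =
                (Quotient.out r : ℚ) + ((m + k : ℤ) : ℚ) / n := by
              rw [hout]; push_cast; field_simp; ring
            have o2 : ((Quotient.out r : ℚ) : QZ) = r := Quotient.out_eq _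
            rw [this, AddCircle.coe_add, o2]
          rw [Finset.sum_congr rfl e2]
          exact sum_shift n g hper m
        rw [key]
        -- now compute π_n * single r c
        rw [piQ, smul_mul_assoc, Finset.sum_mul]
        have e3 : ∀ k ∈ Finset.range n,
            eQZ (((k : ℚ) / (n : ℚ) : ℚ) : QZ) * (AddMonoidAlgebra.single r c : GA) =
            c • g k := by
          intro k _
          simp only [hg, eQZ]
          rw [AddMonoidAlgebra.single_mul_single, one_mul, add_comm,
            AddMonoidAlgebra.smul_single, smul_eq_mul, mul_one]
          norm_cast
        rw [Finset.sum_congr rfl e3, ← Finset.smul_sum, smul_comm]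

end
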